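/- arXiv:2307.05631 — 2 statements merged into one kernel-verified Lean document; each statement's English description precedes it below -/
import Mathlib

section
/- If a primitive event (X,w) = x is part of a cause of an event α in a recursive causal Kripke setting (K,t) at a world w' according to the MODIFIED HP definition of actual causality, then (X,w) = x is part of a cause of α in (K,t) at w' according to the ORIGINAL HP definition. -/
open Classical

noncomputable section

/-- A causal Kripke model `K = (S, W, Rel, F)`: the signature `S` consists of the disjoint
finite sets `Exo` of exogenous and `Endo` of endogenous variables together with a finite
nonempty range `range Γ w` of possible values for each variable `Γ` at each world `w`;
`World` is a finite set of possible worlds, `Rel` is the accessibility relation, and `eqs`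
assigns to each endogenous variable `X` and world `w` a structural equation computing the
value of `(X,w)` from the values of all the other variables (it does not depend on the
coordinate `(X,w)` itself, and its value lies in the range of `(X,w)`). -/
structure CKM where
  Exo : Type
  Endo : Type
  World : Type
  Val : Type
  exoFin : Fintype Exo
  endoFin : Fintype Endo
  worldFin : Fintype World
  Rel : World → World → Prop
  range : (Exo ⊕ Endo) → World → Finset Val
  range_nonempty : ∀ Γ w, (range Γ w).Nonempty
  eqs : Endo → World → (((Exo ⊕ Endo) × World) → Val) → Val
  eqs_mem : ∀ X w g, eqs X w g ∈ range (Sum.inr X) w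
  eqs_indep : ∀ X w g g',
    (∀ p, p ≠ (Sum.inr X, w) → g p = g' p) → eqs X w g = eqs X w g'

namespace CKM

/-- A context assigns to every exogenous variable at every world a value in its range. -/
def ValidContext (K : CKM) (t : K.Exo → K.World → K.Val) : Prop :=
  ∀ U w, t U w ∈ K.range (Sum.inl U) w

/-- `v` is a solution of the causal Kripke setting `(K, t)`: it agrees with the context `t`
on all exogenous variables and satisfies all structural equations. -/
def Solves (K : CKM) (t : K.Exo → K.World → K.Val)
    (v : ((K.Exo ⊕ K.Endo) × K.World) → K.Val) : Prop :=
  (∀ U w, v (Sum.inl U, w) = t U w) ∧ ∀ X w, v (Sum.inr X, w) = K.eqs X w v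

/-- The variable `p` influences the (endogenous) variable `q` (i.e. `q` directly causally
depends on `p`): some change in the value of `p`, keeping all other variables fixed
(within their ranges), changes the value of the structural equation of `q`. -/
def Influences (K : CKM) (p q : (K.Exo ⊕ K.Endo) × K.World) : Prop :=
  ∃ X w, q = (Sum.inr X, w) ∧
    ∃ g g', (∀ r, g r ∈ K.range r.1 r.2) ∧ (∀ r, g' r ∈ K.range r.1 r.2) ∧
      (∀ r, r ≠ p → g r = g' r) ∧ K.eqs X w g ≠ K.eqs X w g'

/-- A causal Kripke model is recursive if it contains no cyclic dependencies. -/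
def Recursive (K : CKM) : Prop :=
  ∀ p, ¬ Relation.TransGen K.Influences p p

/-- The causal Kripke model obtained from `K` by the intervention setting the variables in
`dom` to the values prescribed by `val`. -/
def doInt (K : CKM) (dom : Finset (K.Endo × K.World)) (val : K.Endo × K.World → K.Val) :
    CKM :=
  { K with
    eqs := fun X w g =>
      if (X, w) ∈ dom ∧ val (X, w) ∈ K.range (Sum.inr X) w then val (X, w)
      else K.eqs X w g
    eqs_mem := by
      intro X w g
      by_cases h : (X, w) ∈ dom ∧ val (X, w) ∈ K.range (Sum.inr X) w
      · simp only [if_pos h]; exact h.2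
      · simp only [if_neg h]; exact K.eqs_mem X w g
    eqs_indep := by
      intro X w g g' hgg'
      by_cases h : (X, w) ∈ dom ∧ val (X, w) ∈ K.range (Sum.inr X) w
      · simp only [if_pos h]
      · simp only [if_neg h]; exact K.eqs_indep X w g g' hgg' }

end CKM

/-- Events (modal-Boolean combinations of primitive events): primitive events `X = x` and
`(X,w) = x`, negation, conjunction and the modal operator `□`. -/
inductive Event (E W V : Type) : Type
  | eq : E → V → Event E W V
  | eqAt : E → W → V → Event E W V
  | neg : Event E W V → Event E W V
  | conj : Event E W V → Event E W V → Event E W V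
  | box : Event E W V → Event E W V

namespace CKM

/-- Satisfaction of an event at a world of `K`, relative to a solution `v` of the setting. -/
def SatE (K : CKM) (v : ((K.Exo ⊕ K.Endo) × K.World) → K.Val) :
    K.World → Event K.Endo K.World K.Val → Prop
  | w, .eq X x => v (Sum.inr X, w) = x
  | _, .eqAt X w' x => v (Sum.inr X, w') = x
  | w, .neg α => ¬ SatE K v w α
  | w, .conj α β => SatE K v w α ∧ SatE K v w β
  | w, .box α => ∀ w', K.Rel w w' → SatE K v w' α

/-- `(K,t,w) ⊩ [dom ← val] α` : the event `α` holds at `w` in the model obtained from the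
intervention `dom ← val`, in the context `t`. -/
def SatI (K : CKM) (t : K.Exo → K.World → K.Val) (dom : Finset (K.Endo × K.World))
    (val : K.Endo × K.World → K.Val) (w : K.World) (α : Event K.Endo K.World K.Val) :
    Prop :=
  ∀ v, (K.doInt dom val).Solves t v → (K.doInt dom val).SatE v w α

/-- AC1 : `α` actually holds at `w`, and each conjunct `(X_i, w_j) = y_ij` of `Y = y`
actually holds. -/
def AC1 (K : CKM) (t : K.Exo → K.World → K.Val) (w : K.World)
    (Y : Finset (K.Endo × K.World)) (y : K.Endo × K.World → K.Val)
    (α : Event K.Endo K.World K.Val) : Prop :=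
  ∀ v, K.Solves t v → K.SatE v w α ∧ ∀ p ∈ Y, v (Sum.inr p.1, p.2) = y p

/-- AC2a together with AC2bᵒ (they share the partition `Z`, `N` and the setting `n`):
there is a partition of the endogenous variables into `Z ⊇ Y` and `N` and settings `y'`
of `Y` and `n` of `N` such that `(K,t,w) ⊩ [Y ← y', N ← n] ¬α`, and, where `z*` are the
actual values of the variables of `Z`, for every subset `Z'` of `Z \ Y`,
`(K,t,w) ⊩ [Y ← y, N ← n, Z' ← z'*] α`. -/
def AC2o (K : CKM) (t : K.Exo → K.World → K.Val) (w : K.World)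
    (Y : Finset (K.Endo × K.World)) (y : K.Endo × K.World → K.Val)
    (α : Event K.Endo K.World K.Val) : Prop :=
  ∃ Z N : Finset (K.Endo × K.World), ∃ y' n : K.Endo × K.World → K.Val,
    Y ⊆ Z ∧ Disjoint Z N ∧ (∀ p : K.Endo × K.World, p ∈ Z ∨ p ∈ N) ∧
    (∀ p ∈ Y, y' p ∈ K.range (Sum.inr p.1) p.2) ∧
    (∀ p ∈ N, n p ∈ K.range (Sum.inr p.1) p.2) ∧
    K.SatI t (Y ∪ N) (fun p => if p ∈ Y then y' p else n p) w (.neg α) ∧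
    ∀ v, K.Solves t v → ∀ Z' ⊆ Z \ Y,
      K.SatI t (Y ∪ N ∪ Z')
        (fun p => if p ∈ Y then y p else if p ∈ N then n p else v (Sum.inr p.1, p.2)) w α

/-- AC2a together with AC2bᵘ (updated definition): as in `AC2o`, but moreover the
restoration of the actual values `z'*` must keep `α` true for every subset `N'` of `N`. -/
def AC2u (K : CKM) (t : K.Exo → K.World → K.Val) (w : K.World)
    (Y : Finset (K.Endo × K.World)) (y : K.Endo × K.World → K.Val)
    (α : Event K.Endo K.World K.Val) : Prop :=
  ∃ Z N : Finset (K.Endo × K.World), ∃ y' n : K.Endo × K.World → K.Val,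
    Y ⊆ Z ∧ Disjoint Z N ∧ (∀ p : K.Endo × K.World, p ∈ Z ∨ p ∈ N) ∧
    (∀ p ∈ Y, y' p ∈ K.range (Sum.inr p.1) p.2) ∧
    (∀ p ∈ N, n p ∈ K.range (Sum.inr p.1) p.2) ∧
    K.SatI t (Y ∪ N) (fun p => if p ∈ Y then y' p else n p) w (.neg α) ∧
    ∀ v, K.Solves t v → ∀ Z' ⊆ Z \ Y, ∀ N' ⊆ N,
      K.SatI t (Y ∪ N' ∪ Z')
        (fun p => if p ∈ Y then y p else if p ∈ N' then n p else v (Sum.inr p.1, p.2)) w α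

/-- AC2aᵐ (modified definition): there are a set `N` of endogenous variables and a setting
`y'` of the variables in `Y` such that, where `n*` are the actual values of the variables
in `N`, `(K,t,w) ⊩ [Y ← y', N ← n*] ¬α`. -/
def AC2m (K : CKM) (t : K.Exo → K.World → K.Val) (w : K.World)
    (Y : Finset (K.Endo × K.World)) (y : K.Endo × K.World → K.Val)
    (α : Event K.Endo K.World K.Val) : Prop :=
  ∃ N : Finset (K.Endo × K.World), ∃ y' : K.Endo × K.World → K.Val,
    (∀ p ∈ Y, y' p ∈ K.range (Sum.inr p.1) p.2) ∧
    ∀ v, K.Solves t v →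
      K.SatI t (Y ∪ N)
        (fun p => if p ∈ Y then y' p else v (Sum.inr p.1, p.2)) w (.neg α)

/-- `Y = y` is an actual cause of `α` in `(K,t)` at `w` by the ORIGINAL HP definition. -/
def IsCauseO (K : CKM) (t : K.Exo → K.World → K.Val) (w : K.World)
    (Y : Finset (K.Endo × K.World)) (y : K.Endo × K.World → K.Val)
    (α : Event K.Endo K.World K.Val) : Prop :=
  K.AC1 t w Y y α ∧ K.AC2o t w Y y α ∧
    ∀ Y' ⊂ Y, ∀ y'' : K.Endo × K.World → K.Val,
      ¬ (K.AC1 t w Y' y'' α ∧ K.AC2o t w Y' y'' α)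

/-- `Y = y` is an actual cause of `α` in `(K,t)` at `w` by the UPDATED HP definition. -/
def IsCauseU (K : CKM) (t : K.Exo → K.World → K.Val) (w : K.World)
    (Y : Finset (K.Endo × K.World)) (y : K.Endo × K.World → K.Val)
    (α : Event K.Endo K.World K.Val) : Prop :=
  K.AC1 t w Y y α ∧ K.AC2u t w Y y α ∧
    ∀ Y' ⊂ Y, ∀ y'' : K.Endo × K.World → K.Val,
      ¬ (K.AC1 t w Y' y'' α ∧ K.AC2u t w Y' y'' α)

/-- `Y = y` is an actual cause of `α` in `(K,t)` at `w` by the MODIFIED HP definition. -/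
def IsCauseM (K : CKM) (t : K.Exo → K.World → K.Val) (w : K.World)
    (Y : Finset (K.Endo × K.World)) (y : K.Endo × K.World → K.Val)
    (α : Event K.Endo K.World K.Val) : Prop :=
  K.AC1 t w Y y α ∧ K.AC2m t w Y y α ∧
    ∀ Y' ⊂ Y, ∀ y'' : K.Endo × K.World → K.Val,
      ¬ (K.AC1 t w Y' y'' α ∧ K.AC2m t w Y' y'' α)

/-- `(X,w) = x` is part of a cause of `α` in `(K,t)` at `w'` by the original HP
definition: it is a conjunct of some actual cause `Y = y` of `α` at `w'`. -/
def PartOfCauseO (K : CKM) (t : K.Exo → K.World → K.Val) (w' : K.World)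
    (X : K.Endo) (w : K.World) (x : K.Val) (α : Event K.Endo K.World K.Val) : Prop :=
  ∃ Y y, K.IsCauseO t w' Y y α ∧ (X, w) ∈ Y ∧ y (X, w) = x

/-- `(X,w) = x` is part of a cause of `α` in `(K,t)` at `w'` by the updated HP
definition. -/
def PartOfCauseU (K : CKM) (t : K.Exo → K.World → K.Val) (w' : K.World)
    (X : K.Endo) (w : K.World) (x : K.Val) (α : Event K.Endo K.World K.Val) : Prop :=
  ∃ Y y, K.IsCauseU t w' Y y α ∧ (X, w) ∈ Y ∧ y (X, w) = x

/-- `(X,w) = x` is part of a cause of `α` in `(K,t)` at `w'` by the modified HP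
definition. -/
def PartOfCauseM (K : CKM) (t : K.Exo → K.World → K.Val) (w' : K.World)
    (X : K.Endo) (w : K.World) (x : K.Val) (α : Event K.Endo K.World K.Val) : Prop :=
  ∃ Y y, K.IsCauseM t w' Y y α ∧ (X, w) ∈ Y ∧ y (X, w) = x

end CKM

/-!
Each conjunct `a = y a` of a cause `Y = y` by the modified definition is on its own a cause
by the original one. For AC2ᵒ, reuse the AC2ᵐ witness of `Y` with `Y \ {a}` moved into `N`:
AC2bᵒ could only fail if `Y \ {a}` already satisfied AC2ᵐ, which the minimality of `Y`
forbids. Minimality of `{a}` is automatic, since AC2ᵒ fails for the empty set. Recursiveness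
enters through uniqueness of solutions, which makes "`α` fails after an intervention" the
same as `[Y ← y] ¬α`.
-/

namespace CKM

variable {K : CKM} {t : K.Exo → K.World → K.Val}

lemma Solves.mem_range (ht : K.ValidContext t) {v : (K.Exo ⊕ K.Endo) × K.World → K.Val}
    (hv : K.Solves t v) : ∀ p, v p ∈ K.range p.1 p.2
  | (.inl U, w) => hv.1 U w ▸ ht U w
  | (.inr X, w) => hv.2 X w ▸ K.eqs_mem X w v

lemma eqs_eq_of_eqOn_influences {X : K.Endo} {w : K.World}
    {g g' : (K.Exo ⊕ K.Endo) × K.World → K.Val}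
    (hg : ∀ r, g r ∈ K.range r.1 r.2) (hg' : ∀ r, g' r ∈ K.range r.1 r.2)
    (h : ∀ q, K.Influences q (.inr X, w) → g q = g' q) :
    K.eqs X w g = K.eqs X w g' := by
  let := K.exoFin; let := K.endoFin; let := K.worldFin
  -- change `g` into `g'` one coordinate at a time
  suffices key : ∀ s : Finset ((K.Exo ⊕ K.Endo) × K.World), ∀ g,
      (∀ r, g r ∈ K.range r.1 r.2) → (∀ q, K.Influences q (.inr X, w) → g q = g' q) →
      (∀ q ∉ s, g q = g' q) → K.eqs X w g = K.eqs X w g' from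
    key Finset.univ g hg h fun q hq => absurd (Finset.mem_univ q) hq
  intro s
  induction s using Finset.induction_on with
  | empty => exact fun g _ _ hoff => by rw [funext fun q => hoff q (Finset.notMem_empty q)]
  | insert a s _ ih =>
    intro g hg h hoff
    set g₁ := Function.update g a (g' a)
    have hg₁ : ∀ r, g₁ r ∈ K.range r.1 r.2 := by
      intro r
      rcases eq_or_ne r a with rfl | hr
      · simpa [g₁] using hg' r
      · simpa [g₁, hr] using hg r
    have hstep : K.eqs X w g = K.eqs X w g₁ := by
      by_contra hne
      have hinf : K.Influences a (.inr X, w) :=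
        ⟨X, w, rfl, g, g₁, hg, hg₁, fun r hr => (Function.update_of_ne hr _ _).symm, hne⟩
      exact hne (by rw [show g₁ = g from Function.update_eq_self_iff.mpr (h a hinf).symm])
    have hg₁g' : ∀ q, (q ≠ a → g q = g' q) → g₁ q = g' q := fun q hq => by
      rcases eq_or_ne q a with rfl | hqa
      · exact Function.update_self ..
      · exact (Function.update_of_ne hqa _ _).trans (hq hqa)
    rw [hstep]
    exact ih g₁ hg₁ (fun q hq => hg₁g' q fun _ => h q hq)
      fun q hq => hg₁g' q fun hqa => hoff q (by simp [hqa, hq])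

lemma Recursive.wellFounded (hK : K.Recursive) :
    WellFounded (Relation.TransGen K.Influences) := by
  let := K.exoFin; let := K.endoFin; let := K.worldFin
  have : IsTrans _ (Relation.TransGen K.Influences) := ⟨fun _ _ _ => .trans⟩
  have : Std.Irrefl (Relation.TransGen K.Influences) := ⟨hK⟩
  exact Finite.wellFounded_of_trans_of_irrefl _

lemma Recursive.solves_unique (hK : K.Recursive) (ht : K.ValidContext t)
    {v v' : (K.Exo ⊕ K.Endo) × K.World → K.Val} (hv : K.Solves t v) (hv' : K.Solves t v') :
    v = v' := by
  funext p
  induction p using hK.wellFounded.induction with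
  | _ p ih =>
    obtain ⟨U | X, w⟩ := p
    · rw [hv.1 U w, hv'.1 U w]
    · rw [hv.2 X w, hv'.2 X w]
      exact eqs_eq_of_eqOn_influences (hv.mem_range ht) (hv'.mem_range ht)
        fun q hq => ih q (.single hq)

/-- Only the influencing arguments of an equation matter, so the others are filled with
arbitrary values of their ranges. -/
def Recursive.solution (hK : K.Recursive) (t : K.Exo → K.World → K.Val) :
    (K.Exo ⊕ K.Endo) × K.World → K.Val :=
  hK.wellFounded.fix fun p ih =>
    match p, ih with
    | (.inl U, w), _ => t U w
    | (.inr X, w), ih => K.eqs X w fun q =>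
        if h : Relation.TransGen K.Influences q (.inr X, w) then ih q h
        else (K.range_nonempty q.1 q.2).choose

lemma Recursive.solution_inr (hK : K.Recursive) (X : K.Endo) (w : K.World) :
    hK.solution t (.inr X, w) = K.eqs X w fun q =>
      if Relation.TransGen K.Influences q (.inr X, w) then hK.solution t q
      else (K.range_nonempty q.1 q.2).choose := by
  rw [solution, WellFounded.fix_eq]
  rfl

lemma Recursive.solution_mem_range (hK : K.Recursive) (ht : K.ValidContext t) :
    ∀ p, hK.solution t p ∈ K.range p.1 p.2
  | (.inl U, w) => by rw [solution, WellFounded.fix_eq]; exact ht U w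
  | (.inr X, w) => hK.solution_inr X w ▸ K.eqs_mem X w _

lemma Recursive.solution_solves (hK : K.Recursive) (ht : K.ValidContext t) :
    K.Solves t (hK.solution t) := by
  refine ⟨fun U w => by rw [solution, WellFounded.fix_eq], fun X w => ?_⟩
  rw [hK.solution_inr]
  refine eqs_eq_of_eqOn_influences (fun r => ?_) (hK.solution_mem_range ht)
    fun q hq => if_pos (.single hq)
  split_ifs
  exacts [hK.solution_mem_range ht r, (K.range_nonempty r.1 r.2).choose_spec]

lemma Recursive.existsUnique_solves (hK : K.Recursive) (ht : K.ValidContext t) :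
    ∃! v, K.Solves t v :=
  ⟨hK.solution t, hK.solution_solves ht,
    fun _ hv => hK.solves_unique ht hv (hK.solution_solves ht)⟩

lemma Recursive.doInt (hK : K.Recursive) (d : Finset (K.Endo × K.World))
    (f : K.Endo × K.World → K.Val) : (K.doInt d f).Recursive := by
  refine fun p hp => hK p (Relation.TransGen.mono
    (fun _ _ ⟨X, w, hb, g, g', hg, hg', hgg', hne⟩ =>
      ⟨X, w, hb, g, g', hg, hg', hgg', fun heq => hne ?_⟩) _ _ hp)
  simp only [CKM.doInt]
  split_ifs
  exacts [rfl, heq]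

lemma doInt_eqs_congr {d : Finset (K.Endo × K.World)} {f g : K.Endo × K.World → K.Val}
    (h : ∀ p ∈ d, f p = g p) (X : K.Endo) (w : K.World)
    (v : (K.Exo ⊕ K.Endo) × K.World → K.Val) :
    (K.doInt d f).eqs X w v = (K.doInt d g).eqs X w v := by
  by_cases hp : (X, w) ∈ d
  · simp only [CKM.doInt, h _ hp]
  · simp only [CKM.doInt, hp, false_and, if_false]

lemma satE_doInt (d : Finset (K.Endo × K.World)) (f : K.Endo × K.World → K.Val)
    (v : (K.Exo ⊕ K.Endo) × K.World → K.Val) (w : K.World) (α : Event K.Endo K.World K.Val) :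
    (K.doInt d f).SatE v w α ↔ K.SatE v w α := by
  induction α generalizing w with
  | eq | eqAt => exact Iff.rfl
  | neg β ih => exact not_congr (ih w)
  | conj β γ ihβ ihγ => exact and_congr (ihβ w) (ihγ w)
  | box β ih => exact forall₂_congr fun w' _ => ih w'

lemma satI_congr {d : Finset (K.Endo × K.World)} {f g : K.Endo × K.World → K.Val}
    {w : K.World} {α : Event K.Endo K.World K.Val} (h : ∀ p ∈ d, f p = g p) :
    K.SatI t d f w α ↔ K.SatI t d g w α := by
  refine forall_congr' fun v => imp_congr ?_ ?_
  · exact and_congr Iff.rfl (forall₂_congr fun X w => doInt_eqs_congr h X w v ▸ Iff.rfl)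
  · exact (satE_doInt d f v w α).trans (satE_doInt d g v w α).symm

/-- An intervened recursive setting has exactly one solution. -/
lemma satI_neg_iff (hK : K.Recursive) (ht : K.ValidContext t)
    {d : Finset (K.Endo × K.World)} {f : K.Endo × K.World → K.Val} {w : K.World}
    {α : Event K.Endo K.World K.Val} :
    K.SatI t d f w (.neg α) ↔ ¬ K.SatI t d f w α := by
  obtain ⟨v, hv, huniq⟩ := @Recursive.existsUnique_solves (K.doInt d f) t (hK.doInt d f) ht
  have hsat : ∀ β, K.SatI t d f w β ↔ (K.doInt d f).SatE v w β := fun β =>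
    ⟨fun h => h v hv, fun h u hu => huniq u hu ▸ h⟩
  rw [hsat, hsat]
  rfl

variable {w : K.World} {Y : Finset (K.Endo × K.World)} {y : K.Endo × K.World → K.Val}
  {α : Event K.Endo K.World K.Val}

lemma AC1.mono (h : K.AC1 t w Y y α) {Y' : Finset (K.Endo × K.World)} (hY' : Y' ⊆ Y) :
    K.AC1 t w Y' y α :=
  fun v hv => ⟨(h v hv).1, fun p hp => (h v hv).2 p (hY' hp)⟩

/-- With `Z' = ∅`, AC2bᵒ restores nothing and contradicts AC2a. -/
lemma not_AC2o_empty (hK : K.Recursive) (ht : K.ValidContext t) : ¬ K.AC2o t w ∅ y α := by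
  rintro ⟨Z, N, y', n, -, -, -, -, -, hneg, hpos⟩
  obtain ⟨v₀, hv₀, -⟩ := hK.existsUnique_solves ht
  have hα := hpos v₀ hv₀ ∅ (Finset.empty_subset _)
  simp only [Finset.empty_union, Finset.union_empty, Finset.notMem_empty, if_false] at hneg hα
  rw [satI_congr fun p hp => if_pos hp] at hα
  exact (satI_neg_iff hK ht).mp hneg hα

/-- Take `N = (Y ∪ N₀) \ {a}`, frozen at `y'` on `Y` and at the actual values elsewhere. If
restoring actual values on some `Z'` destroyed `α`, that intervention would witness AC2ᵐ for
`Y \ {a}`, since `y a` is the actual value of `a`. -/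
lemma IsCauseM.AC2o_singleton (hK : K.Recursive) (ht : K.ValidContext t)
    (hY : K.IsCauseM t w Y y α) {a : K.Endo × K.World} (ha : a ∈ Y) :
    K.AC2o t w {a} y α := by
  let := K.endoFin; let := K.worldFin
  obtain ⟨hAC1, ⟨N₀, y', hy', hneg⟩, hmin⟩ := hY
  obtain ⟨v₀, hv₀, huniq⟩ := hK.existsUnique_solves ht
  set N := (Y ∪ N₀).erase a
  set n : K.Endo × K.World → K.Val := fun p => if p ∈ Y then y' p else v₀ (.inr p.1, p.2)
  have haN : a ∉ N := Finset.notMem_erase a _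
  have hYN : Y.erase a ⊆ N := Finset.erase_subset_erase a Finset.subset_union_left
  refine ⟨Nᶜ, N, y', n, Finset.singleton_subset_iff.mpr (Finset.mem_compl.mpr haN),
    disjoint_compl_left, fun p => (Classical.em (p ∈ N)).symm.imp Finset.mem_compl.mpr id,
    fun p hp => Finset.mem_singleton.mp hp ▸ hy' a ha, fun p _ => ?_, ?_, ?_⟩
  · by_cases hp : p ∈ Y
    · simpa [n, hp] using hy' p hp
    · simpa [n, hp] using hv₀.mem_range ht (.inr p.1, p.2)
  · have hdom : {a} ∪ N = Y ∪ N₀ := by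
      rw [← Finset.insert_eq, Finset.insert_erase (Finset.mem_union_left _ ha)]
    have hval : (fun p => if p ∈ ({a} : Finset _) then y' p else n p) =
        fun p => if p ∈ Y then y' p else v₀ (.inr p.1, p.2) := by
      funext p
      by_cases hpa : p = a <;> simp [n, hpa, ha]
    rw [hdom, hval]
    exact hneg v₀ hv₀
  · intro v hv Z' _
    rw [huniq v hv]
    by_contra hα
    refine hmin (Y.erase a) (Finset.erase_ssubset ha) y
      ⟨hAC1.mono (Finset.erase_subset a Y), {a} ∪ N ∪ Z', y',
        fun p hp => hy' p (Finset.mem_of_mem_erase hp), fun u hu => ?_⟩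
    have hdom : Y.erase a ∪ ({a} ∪ N ∪ Z') = {a} ∪ N ∪ Z' :=
      Finset.union_eq_right.mpr (hYN.trans (Finset.subset_union_right.trans
        Finset.subset_union_left))
    have hval : (fun p => if p ∈ Y.erase a then y' p else u (.inr p.1, p.2)) =
        fun p => if p ∈ ({a} : Finset _) then y p else if p ∈ N then n p
          else v₀ (.inr p.1, p.2) := by
      funext p
      rw [huniq u hu]
      by_cases hpa : p = a
      · subst hpa
        simpa using ((hAC1 v₀ hv₀).2 p ha)
      · by_cases hpY : p ∈ Y <;> simp [n, N, hpa, hpY]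
    rw [hdom, hval]
    exact (satI_neg_iff hK ht).mpr hα

lemma IsCauseM.isCauseO_singleton (hK : K.Recursive) (ht : K.ValidContext t)
    (hY : K.IsCauseM t w Y y α) {a : K.Endo × K.World} (ha : a ∈ Y) :
    K.IsCauseO t w {a} y α := by
  refine ⟨hY.1.mono (Finset.singleton_subset_iff.mpr ha), hY.AC2o_singleton hK ht ha, ?_⟩
  rintro Y' hY' y'' ⟨-, hAC2⟩
  rw [Finset.ssubset_singleton_iff.mp hY'] at hAC2
  exact not_AC2o_empty hK ht hAC2

end CKM

/-- If a primitive event `(X,w) = x` is part of a cause of an event `α`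
in a recursive causal Kripke setting `(K,t)` at a world `w'` according to the MODIFIED HP
definition of actual causality, then `(X,w) = x` is part of a cause of `α` in `(K,t)` at
`w'` according to the ORIGINAL HP definition. -/
theorem partOfCause_modified_implies_original (K : CKM) (hK : K.Recursive)
    (t : K.Exo → K.World → K.Val) (ht : K.ValidContext t)
    (w' : K.World) (X : K.Endo) (w : K.World) (x : K.Val)
    (α : Event K.Endo K.World K.Val)
    (h : K.PartOfCauseM t w' X w x α) :
    K.PartOfCauseO t w' X w x α := by
  obtain ⟨Y, y, hY, hXY, hyx⟩ := h
  exact ⟨{(X, w)}, y, hY.isCauseO_singleton hK ht hXY, Finset.mem_singleton_self _, hyx⟩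
end
end

section
/- Validity of the □-axiom: for every recursive causal Kripke setting (K,t), every world w, every intervention Y←y (possibly empty) with Y ⊆ V × W, and every formula φ of the modal causal language L_M, (K,t,w) ⊩ [Y←y]□φ if and only if (K,t,w) ⊩ □[Y←y]φ. -/
open Classical

noncomputable section

/-- Formulas of the modal causal language `L_M`: primitive events `X = x` and `(X,w) = x`,
negation, conjunction, the modal operator `□`, and interventions `[Y ← y] α` applied to
(modal-Boolean) events `α`. -/
inductive Formula (E W V : Type) : Type
  | eq : E → V → Formula E W V
  | eqAt : E → W → V → Formula E W V
  | neg : Formula E W V → Formula E W V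
  | conj : Formula E W V → Formula E W V → Formula E W V
  | box : Formula E W V → Formula E W V
  | interv : Finset (E × W) → ((E × W) → V) → Event E W V → Formula E W V

/-- The possibility operator `◇ = ¬□¬` on events. -/
def Event.dia {E W V : Type} (α : Event E W V) : Event E W V := .neg (.box (.neg α))

/-- The possibility operator `◇ = ¬□¬` on formulas. -/
def Formula.dia {E W V : Type} (φ : Formula E W V) : Formula E W V := .neg (.box (.neg φ))

namespace CKM

/-- Satisfaction of a formula of `L_M` at a world of `K`, relative to a solution `v` of the
causal Kripke setting `(K,t)`. -/
def SatF (K : CKM) (t : K.Exo → K.World → K.Val)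
    (v : ((K.Exo ⊕ K.Endo) × K.World) → K.Val) :
    K.World → Formula K.Endo K.World K.Val → Prop
  | w, .eq X x => v (Sum.inr X, w) = x
  | _, .eqAt X w' x => v (Sum.inr X, w') = x
  | w, .neg φ => ¬ SatF K t v w φ
  | w, .conj φ ψ => SatF K t v w φ ∧ SatF K t v w ψ
  | w, .box φ => ∀ w', K.Rel w w' → SatF K t v w' φ
  | w, .interv dom val α => K.SatI t dom val w α

/-- `(K,t,w) ⊩ φ` : satisfaction of a formula of `L_M` at the world `w` of the causal
Kripke setting `(K,t)`. -/
def Sat (K : CKM) (t : K.Exo → K.World → K.Val) (w : K.World)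
    (φ : Formula K.Endo K.World K.Val) : Prop :=
  ∀ v, K.Solves t v → K.SatF t v w φ

end CKM

/-- Validity of the □-axiom: for every recursive causal Kripke setting
`(K,t)`, every world `w`, every (possibly empty) intervention `Y ← y` with
`Y ⊆ V × W` (whose prescribed values lie in the corresponding ranges), and every formula
`α` of the modal causal language `L_M` (an event, so that `[Y←y]□α` is well formed),
`(K,t,w) ⊩ [Y←y]□α` if and only if `(K,t,w) ⊩ □[Y←y]α`. -/
theorem box_axiom_valid (K : CKM) (hK : K.Recursive)
    (t : K.Exo → K.World → K.Val) (ht : K.ValidContext t) (w : K.World)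
    (dom : Finset (K.Endo × K.World)) (val : K.Endo × K.World → K.Val)
    (hval : ∀ p ∈ dom, val p ∈ K.range (Sum.inr p.1) p.2)
    (α : Event K.Endo K.World K.Val) :
    K.Sat t w (.interv dom val (.box α)) ↔ K.Sat t w (.box (.interv dom val α)) := by
  simp only [CKM.Sat, CKM.SatF, CKM.SatI, CKM.SatE]
  constructor
  · intro h v hv w' hw' v' hv'
    exact h v hv v' hv' w' hw'
  · intro h v hv v' hv' w' hw'
    exact h v hv w' hw' v' hv'
end
end
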